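/- arXiv:1903.08977 — 4 statements merged into one kernel-verified Lean document; each statement's English description precedes it below -/
import Mathlib

section
/- Let A be a symmetric real n×n matrix with eigenvalues λ₁ ≥ ⋯ ≥ λₙ, and let B be any symmetric n×n matrix with at most 1 positive and at most d negative eigenvalues (d ≤ n−1). Then ‖A − B‖_F² ≥ Σ_{i=2}^{n−d} λ_i² + Σ_{i=n−d+1}^{n} (max(λ_i,0))². -/
/-!
Conjugating by the orthogonal eigenbases gives
`‖A - B‖_F² = ∑_{i,k} S_{ik} (μ_i - ν_k)²` with `S = (QᵀP) ∘ (QᵀP)` doubly stochastic.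
The inertia of `B` forces `ν_1 ≥ 0`, `ν_k ≤ 0` for `k ≥ 2` and `ν_k = 0` for `2 ≤ k ≤ n - d`,
so `(μ_i - ν_k)²` dominates `max(μ_i, 0)²` when `k ≥ 2` plus `min(μ_i, 0)²` when `k ≤ n - d`.
Summing against `S`, the bathtub principle applied to the index sets `{1}` (where `max(μ_i, 0)²`
is largest) and `{n - d + 1, …, n}` (where `min(μ_i, 0)²` is largest) yields the bound.
-/

open Matrix Finset

theorem monotone_max_zero_sq : Monotone fun x : ℝ => max x 0 ^ 2 := fun _ _ hxy =>
  pow_le_pow_left₀ (le_max_right _ _) (max_le_max_right 0 hxy) 2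

theorem antitone_min_zero_sq : Antitone fun x : ℝ => min x 0 ^ 2 := fun x y hxy => by
  nlinarith [min_le_min_right 0 hxy, min_le_right y 0]

theorem max_zero_sq_add_min_zero_sq (a : ℝ) : max a 0 ^ 2 + min a 0 ^ 2 = a ^ 2 := by
  rcases le_total a 0 with ha | ha <;> simp [ha]

theorem ite_max_zero_sq_add_ite_min_zero_sq_le {p q : Prop} [Decidable p] [Decidable q]
    {a b : ℝ} (hp : p → b ≤ 0) (hq : q → 0 ≤ b) :
    (if p then max a 0 ^ 2 else 0) + (if q then min a 0 ^ 2 else 0) ≤ (a - b) ^ 2 := by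
  split_ifs with hp' hq' hq'
  · rw [le_antisymm (hp hp') (hq hq'), sub_zero, max_zero_sq_add_min_zero_sq]
  · have hb := hp hp'
    rcases le_total a 0 with ha | ha <;> simp [ha] <;> nlinarith
  · have hb := hq hq'
    rcases le_total a 0 with ha | ha <;> simp [ha] <;> nlinarith
  · simp only [add_zero]
    positivity

theorem Antitone.nonpos_of_card_filter_pos_le {α : Type*} [LinearOrder α] [Zero α] {n m : ℕ}
    {f : Fin n → α} (hf : Antitone f) (hpos : (univ.filter fun i => 0 < f i).card ≤ m)
    {k : Fin n} (hk : m ≤ k.val) : f k ≤ 0 := by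
  by_contra! hfk
  have hsub : Iic k ⊆ univ.filter fun i => 0 < f i := fun i hi =>
    mem_filter.mpr ⟨mem_univ i, hfk.trans_le (hf (mem_Iic.mp hi))⟩
  have hcard := card_le_card hsub
  rw [Fin.card_Iic] at hcard
  omega

theorem Antitone.nonneg_of_card_filter_neg_le {α : Type*} [LinearOrder α] [Zero α] {n m : ℕ}
    {f : Fin n → α} (hf : Antitone f) (hneg : (univ.filter fun i => f i < 0).card ≤ m)
    {k : Fin n} (hk : k.val < n - m) : 0 ≤ f k := by
  by_contra! hfk
  have hsub : Ici k ⊆ univ.filter fun i => f i < 0 := fun i hi =>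
    mem_filter.mpr ⟨mem_univ i, (hf (mem_Ici.mp hi)).trans_lt hfk⟩
  have hcard := card_le_card hsub
  rw [Fin.card_Ici] at hcard
  omega

-- Bathtub principle: weights in `[0, 1]` of total mass `#J` do best on `J`, where `f` is largest.
theorem Finset.sum_mul_le_sum_of_threshold {ι : Type*} [Fintype ι] [DecidableEq ι]
    (J : Finset ι) {f w : ι → ℝ} (c : ℝ) (hw0 : ∀ i, 0 ≤ w i) (hw1 : ∀ i, w i ≤ 1)
    (hw : ∑ i, w i = #J) (hJ : ∀ i ∈ J, c ≤ f i) (hJc : ∀ i ∉ J, f i ≤ c) :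
    ∑ i, f i * w i ≤ ∑ i ∈ J, f i := by
  have key (i : ι) :
      f i * w i - (if i ∈ J then f i else 0) ≤ c * (w i - if i ∈ J then 1 else 0) := by
    split_ifs with hi
    · nlinarith [hJ i hi, hw1 i]
    · nlinarith [hJc i hi, hw0 i]
  have hsum := sum_le_sum fun i (_ : i ∈ univ) => key i
  simp only [sum_sub_distrib, ← mul_sum, sum_ite_mem_eq, hw, sum_const, nsmul_eq_mul, mul_one,
    sub_self, mul_zero] at hsum
  linarith

namespace Matrix

variable {m n : Type*} [Fintype m] [Fintype n]

theorem sum_sq_eq_trace_mul_transpose (X : Matrix m n ℝ) :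
    ∑ i, ∑ j, X i j ^ 2 = trace (X * Xᵀ) := by
  simp [trace, mul_apply, sq]

theorem sum_sq_mul_of_mul_transpose_eq_one [DecidableEq n] (X : Matrix m n ℝ)
    {U : Matrix n n ℝ} (hU : U * Uᵀ = 1) : ∑ i, ∑ j, (X * U) i j ^ 2 = ∑ i, ∑ j, X i j ^ 2 := by
  rw [sum_sq_eq_trace_mul_transpose, sum_sq_eq_trace_mul_transpose, transpose_mul,
    Matrix.mul_assoc, ← Matrix.mul_assoc U, hU, Matrix.one_mul]

theorem sum_sq_mul_of_transpose_mul_eq_one [DecidableEq m] (X : Matrix m n ℝ)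
    {U : Matrix m m ℝ} (hU : Uᵀ * U = 1) : ∑ i, ∑ j, (U * X) i j ^ 2 = ∑ i, ∑ j, X i j ^ 2 := by
  rw [sum_sq_eq_trace_mul_transpose, sum_sq_eq_trace_mul_transpose, transpose_mul,
    Matrix.mul_assoc, trace_mul_comm, Matrix.mul_assoc, Matrix.mul_assoc, hU, Matrix.mul_one]

theorem sq_mem_doublyStochastic [DecidableEq n] {M : Matrix n n ℝ} (hM : M * Mᵀ = 1) :
    (fun i j => M i j ^ 2) ∈ doublyStochastic ℝ n := by
  have hM' : Mᵀ * M = 1 := mul_eq_one_comm.mp hM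
  refine mem_doublyStochastic_iff_sum.mpr ⟨fun i j => sq_nonneg _, fun i => ?_, fun j => ?_⟩
  · simpa [mul_apply, sq] using congrFun (congrFun hM i) i
  · simpa [mul_apply, sq] using congrFun (congrFun hM' j) j

theorem sum_compl_le_sum_mul_sum_compl_of_mem_doublyStochastic {ι : Type*} [Fintype ι]
    [DecidableEq ι] {S : Matrix ι ι ℝ} (hS : S ∈ doublyStochastic ℝ ι) (J : Finset ι)
    {f : ι → ℝ} (c : ℝ) (hJ : ∀ i ∈ J, c ≤ f i) (hJc : ∀ i ∉ J, f i ≤ c) :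
    ∑ i ∈ Jᶜ, f i ≤ ∑ i, f i * ∑ k ∈ Jᶜ, S i k := by
  have hrow (i : ι) : ∑ k ∈ J, S i k + ∑ k ∈ Jᶜ, S i k = 1 := by
    rw [sum_add_sum_compl, sum_row_of_mem_doublyStochastic hS]
  have hmass : ∑ i, ∑ k ∈ J, S i k = #J := by
    calc ∑ i, ∑ k ∈ J, S i k = ∑ k ∈ J, ∑ i, S i k := sum_comm
      _ = #J := by simp [sum_col_of_mem_doublyStochastic hS]
  have hbathtub := sum_mul_le_sum_of_threshold J c
    (fun i => sum_nonneg fun k _ => nonneg_of_mem_doublyStochastic hS)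
    (fun i => (sum_le_univ_sum_of_nonneg fun k => nonneg_of_mem_doublyStochastic hS).trans_eq
      (sum_row_of_mem_doublyStochastic hS i))
    hmass hJ hJc
  have hsplit := sum_add_sum_compl J f
  have hcompl : ∑ i, f i * ∑ k ∈ Jᶜ, S i k = ∑ i, f i - ∑ i, f i * ∑ k ∈ J, S i k := by
    rw [← sum_sub_distrib]
    exact sum_congr rfl fun i _ => by linear_combination f i * hrow i
  linarith

theorem sum_sq_conj_diagonal_sub_conj_diagonal [DecidableEq n] {Q P : Matrix n n ℝ}
    (hQ : Qᵀ * Q = 1) (hP : Pᵀ * P = 1) (μ ν : n → ℝ) :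
    ∑ i, ∑ j, ((Q * diagonal μ * Qᵀ) i j - (P * diagonal ν * Pᵀ) i j) ^ 2
      = ∑ i, ∑ k, (Qᵀ * P) i k ^ 2 * (μ i - ν k) ^ 2 := by
  have hconj : Qᵀ * (Q * diagonal μ * Qᵀ - P * diagonal ν * Pᵀ) * P
      = diagonal μ * (Qᵀ * P) - (Qᵀ * P) * diagonal ν := by
    simp only [Matrix.mul_sub, Matrix.sub_mul, ← Matrix.mul_assoc, hQ, Matrix.one_mul]
    rw [Matrix.mul_assoc _ Pᵀ P, hP, Matrix.mul_one]
  calc ∑ i, ∑ j, ((Q * diagonal μ * Qᵀ) i j - (P * diagonal ν * Pᵀ) i j) ^ 2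
      = ∑ i, ∑ j, (Qᵀ * (Q * diagonal μ * Qᵀ - P * diagonal ν * Pᵀ) * P) i j ^ 2 := by
        rw [sum_sq_mul_of_mul_transpose_eq_one _ (mul_eq_one_comm.mp hP),
          sum_sq_mul_of_transpose_mul_eq_one _ (by rwa [transpose_transpose, mul_eq_one_comm])]
        rfl
    _ = ∑ i, ∑ k, (Qᵀ * P) i k ^ 2 * (μ i - ν k) ^ 2 := by
        simp only [hconj, sub_apply, diagonal_mul, mul_diagonal]
        congr! 2 with i k
        ring

end Matrix

theorem sum_filter_sq_add_sum_filter_max_zero_sq_le {n d : ℕ} (hd : d < n)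
    {S : Matrix (Fin n) (Fin n) ℝ} (hS : S ∈ doublyStochastic ℝ (Fin n)) {μ ν : Fin n → ℝ}
    (hμ : Antitone μ) (hν_pos : ∀ k : Fin n, 1 ≤ k.val → ν k ≤ 0)
    (hν_neg : ∀ k : Fin n, k.val < n - d → 0 ≤ ν k) :
    (∑ i ∈ univ.filter fun i : Fin n => 1 ≤ i.val ∧ i.val < n - d, μ i ^ 2)
      + (∑ i ∈ univ.filter fun i : Fin n => n - d ≤ i.val, max (μ i) 0 ^ 2)
    ≤ ∑ i, ∑ k, S i k * (μ i - ν k) ^ 2 := by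
  set g : Fin n → ℝ := fun i => max (μ i) 0 ^ 2
  set h : Fin n → ℝ := fun i => min (μ i) 0 ^ 2
  have hg : Antitone g := monotone_max_zero_sq.comp_antitone hμ
  have hh : Monotone h := antitone_min_zero_sq.comp hμ
  set i₀ : Fin n := ⟨0, by omega⟩
  set J := univ.filter fun i : Fin n => n - d ≤ i.val
  have hi₀ (k : Fin n) : k ∈ ({i₀}ᶜ : Finset (Fin n)) ↔ 1 ≤ k.val := by
    simp [i₀, Fin.ext_iff, Nat.one_le_iff_ne_zero]
  have hJ (k : Fin n) : k ∈ J ↔ n - d ≤ k.val := by simp [J]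
  have hJc (k : Fin n) : k ∈ Jᶜ ↔ k.val < n - d := by simp [hJ]; omega
  have hg_bound : ∑ i ∈ {i₀}ᶜ, g i ≤ ∑ i, g i * ∑ k ∈ {i₀}ᶜ, S i k :=
    sum_compl_le_sum_mul_sum_compl_of_mem_doublyStochastic hS {i₀} (g i₀)
      (by simp) fun i _ => hg (Fin.le_def.mpr (Nat.zero_le _))
  have hh_bound : ∑ i ∈ Jᶜ, h i ≤ ∑ i, h i * ∑ k ∈ Jᶜ, S i k :=
    sum_compl_le_sum_mul_sum_compl_of_mem_doublyStochastic hS J (h ⟨n - d - 1, by omega⟩)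
      (fun i hi => hh (by rw [hJ] at hi; simp only [Fin.le_def]; omega))
      fun i hi => hh (by rw [hJ] at hi; simp only [Fin.le_def]; omega)
  have hpoint (i k : Fin n) :
      (if k ∈ ({i₀}ᶜ : Finset (Fin n)) then g i else 0) + (if k ∈ Jᶜ then h i else 0)
        ≤ (μ i - ν k) ^ 2 :=
    ite_max_zero_sq_add_ite_min_zero_sq_le (fun hk => hν_pos k ((hi₀ k).mp hk))
      fun hk => hν_neg k ((hJc k).mp hk)
  calc (∑ i ∈ univ.filter fun i : Fin n => 1 ≤ i.val ∧ i.val < n - d, μ i ^ 2)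
        + (∑ i ∈ J, g i)
      ≤ ∑ i ∈ {i₀}ᶜ, g i + ∑ i ∈ Jᶜ, h i := by
        rw [sum_filter, ← sum_ite_mem_eq J, ← sum_ite_mem_eq {i₀}ᶜ, ← sum_ite_mem_eq Jᶜ,
          ← sum_add_distrib, ← sum_add_distrib]
        refine sum_le_sum fun i _ => ?_
        have hgh : g i + h i = μ i ^ 2 := max_zero_sq_add_min_zero_sq (μ i)
        have hg0 : 0 ≤ g i := sq_nonneg _
        have hh0 : 0 ≤ h i := sq_nonneg _
        simp only [hi₀, hJ, hJc]
        split_ifs <;> first | omega | linarith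
    _ ≤ ∑ i, (g i * ∑ k ∈ {i₀}ᶜ, S i k + h i * ∑ k ∈ Jᶜ, S i k) := by
        rw [sum_add_distrib]
        exact add_le_add hg_bound hh_bound
    _ = ∑ i, ∑ k, S i k *
          ((if k ∈ ({i₀}ᶜ : Finset (Fin n)) then g i else 0) + (if k ∈ Jᶜ then h i else 0)) := by
        simp only [mul_add, mul_ite, mul_zero, sum_add_distrib, sum_ite_mem_eq, ← sum_mul,
          mul_comm]
    _ ≤ ∑ i, ∑ k, S i k * (μ i - ν k) ^ 2 :=
        sum_le_sum fun i _ => sum_le_sum fun k _ =>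
          mul_le_mul_of_nonneg_left (hpoint i k) (nonneg_of_mem_doublyStochastic hS)

theorem strain_lower_bound {n d : ℕ} (hn : 0 < n) (hd : d ≤ n - 1)
    (A B : Matrix (Fin n) (Fin n) ℝ)
    (Q : Matrix (Fin n) (Fin n) ℝ) (hQ : Qᵀ * Q = 1)
    (μ : Fin n → ℝ) (hμ : Antitone μ)
    (hA : A = Q * Matrix.diagonal μ * Qᵀ)
    (P : Matrix (Fin n) (Fin n) ℝ) (hP : Pᵀ * P = 1)
    (ν : Fin n → ℝ) (hν : Antitone ν)
    (hB : B = P * Matrix.diagonal ν * Pᵀ)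
    (hBpos : (Finset.univ.filter fun i => 0 < ν i).card ≤ 1)
    (hBneg : (Finset.univ.filter fun i => ν i < 0).card ≤ d) :
    (∑ i ∈ Finset.univ.filter fun i : Fin n => 1 ≤ i.val ∧ i.val < n - d, μ i ^ 2)
      + (∑ i ∈ Finset.univ.filter fun i : Fin n => n - d ≤ i.val, max (μ i) 0 ^ 2)
    ≤ ∑ i, ∑ j, (A i j - B i j) ^ 2 := by
  have hM : (Qᵀ * P) * (Qᵀ * P)ᵀ = 1 := by
    rw [transpose_mul, transpose_transpose, Matrix.mul_assoc, ← Matrix.mul_assoc P,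
      mul_eq_one_comm.mp hP, Matrix.one_mul, hQ]
  rw [hA, hB, sum_sq_conj_diagonal_sub_conj_diagonal hQ hP]
  exact sum_filter_sq_add_sum_filter_max_zero_sq_le (by omega) (sq_mem_doublyStochastic hM) hμ
    (fun _ hk => hν.nonpos_of_card_filter_pos_le hBpos hk)
    (fun _ hk => hν.nonneg_of_card_filter_neg_le hBneg hk)
end

section
/- Let A be a symmetric real n×n matrix with strictly positive entries, eigendecomposition A = QΛQᵀ with eigenvalues λ₁ ≥ ⋯ ≥ λₙ and orthonormal eigenvectors q₁,…,qₙ, and let d ≤ n−1. Define the n×(d+1) matrix X = [√λ₁ q₁ | √((−λ_{n−d+1})⁺) q_{n−d+1} | ⋯ | √((−λₙ)⁺) qₙ]. Then X minimizes ‖A − Y J Yᵀ‖_F² over all Y ∈ ℝ^{n×(d+1)}, where J = diag(1,−1,…,−1). -/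
open Matrix

def lorentzJ (d : ℕ) : Matrix (Fin (d + 1)) (Fin (d + 1)) ℝ :=
  Matrix.diagonal (fun i => if i = 0 then (1 : ℝ) else -1)

/-!
Write `A = Q diag(μ) Qᵀ` and, for a competitor `Y`, `Y J Yᵀ = U diag(g) Uᵀ` with `g` sorted
decreasingly. Since `J` has one positive and `d` negative entries, `Y J Yᵀ` has at most one
positive and at most `d` negative eigenvalues (Sylvester's law of inertia), so `g k ≤ 0` for
`k ≥ 1` and `g k ≥ 0` for `k < n - d`. By the Hoffman–Wielandt inequality (Birkhoff's theorem plus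
the rearrangement inequality) `‖A - Y J Yᵀ‖² ≥ ∑ (μ k - g k)²`. On the other hand `X J Xᵀ` has
the same eigenvectors as `A` and eigenvalues `μ 0`, then `0`, then `min (μ k) 0` on the last `d`
indices, which minimise each `(μ k - g k)²` separately under these sign constraints.
-/

open Finset

lemma Matrix.mul_diagonal_mul_transpose_apply {m n α : Type*} [Fintype n] [DecidableEq n]
    [NonUnitalNonAssocSemiring α] (M N : Matrix m n α) (v : n → α) (i k : m) :
    (M * diagonal v * Nᵀ) i k = ∑ j, M i j * v j * N k j := by
  rw [mul_apply]
  simp only [mul_diagonal, transpose_apply]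

lemma Matrix.isSymm_mul_diagonal_mul_transpose {m n α : Type*} [Fintype n] [DecidableEq n]
    [CommSemiring α] (Y : Matrix m n α) (v : n → α) : (Y * diagonal v * Yᵀ).IsSymm := by
  simp [IsSymm, transpose_mul, Matrix.mul_assoc]

theorem Matrix.IsSymm.exists_orthogonal_diagonalization {n : Type*} [Fintype n] [DecidableEq n]
    {B : Matrix n n ℝ} (hB : B.IsSymm) :
    ∃ (U : Matrix n n ℝ) (β : n → ℝ), Uᵀ * U = 1 ∧ B = U * diagonal β * Uᵀ := by
  have hBH : B.IsHermitian := by rw [IsHermitian, conjTranspose_eq_transpose_of_trivial, hB.eq]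
  refine ⟨hBH.eigenvectorUnitary, hBH.eigenvalues, ?_, ?_⟩
  · simpa [star_eq_conjTranspose, conjTranspose_eq_transpose_of_trivial] using
      Unitary.coe_star_mul_self hBH.eigenvectorUnitary
  · conv_lhs => rw [hBH.spectral_theorem]
    simp [Unitary.conjStarAlgAut_apply, star_eq_conjTranspose,
      conjTranspose_eq_transpose_of_trivial]

theorem Matrix.IsSymm.exists_orthogonal_antitone_diagonalization {n : ℕ}
    {B : Matrix (Fin n) (Fin n) ℝ} (hB : B.IsSymm) :
    ∃ (U : Matrix (Fin n) (Fin n) ℝ) (g : Fin n → ℝ),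
      Uᵀ * U = 1 ∧ Antitone g ∧ B = U * diagonal g * Uᵀ := by
  obtain ⟨U, β, hU, rfl⟩ := hB.exists_orthogonal_diagonalization
  let σ : Equiv.Perm (Fin n) := Fin.revPerm.trans (Tuple.sort β)
  refine ⟨U.submatrix id σ, β ∘ σ, ?_, ?_, ?_⟩
  · rw [transpose_submatrix]
    exact (submatrix_mul_equiv Uᵀ U σ (Equiv.refl _) σ).trans (by rw [hU, submatrix_one_equiv])
  · intro i j hij
    simpa [σ] using Tuple.monotone_sort β (Fin.rev_le_rev.mpr hij)
  · ext i k
    simp only [mul_diagonal_mul_transpose_apply, submatrix_apply, id, Function.comp]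
    exact (Equiv.sum_comp σ fun j => U i j * β j * U k j).symm

section Frobenius

variable {n : Type*} [Fintype n]

lemma sum_mul_eq_trace_mul_transpose {m : Type*} [Fintype m] (M N : Matrix m n ℝ) :
    ∑ i, ∑ j, M i j * N i j = trace (M * Nᵀ) := by
  simp [trace, mul_apply]

variable [DecidableEq n]

lemma sum_sq_conj_orthogonal {Q : Matrix n n ℝ} (hQ : Qᵀ * Q = 1) (M : Matrix n n ℝ) :
    ∑ i, ∑ j, (Q * M * Qᵀ) i j ^ 2 = ∑ i, ∑ j, M i j ^ 2 := by
  simp only [sq, sum_mul_eq_trace_mul_transpose]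
  have : Q * M * Qᵀ * (Q * M * Qᵀ)ᵀ = Q * (M * Mᵀ) * Qᵀ := by
    simp only [transpose_mul, transpose_transpose, Matrix.mul_assoc, ← Matrix.mul_assoc Qᵀ, hQ,
      Matrix.one_mul]
  rw [this, trace_mul_cycle, hQ, Matrix.one_mul]

lemma sum_sq_conj_diagonal {Q : Matrix n n ℝ} (hQ : Qᵀ * Q = 1) (f : n → ℝ) :
    ∑ i, ∑ j, (Q * diagonal f * Qᵀ) i j ^ 2 = ∑ i, f i ^ 2 := by
  rw [sum_sq_conj_orthogonal hQ]
  simp [diagonal_apply, ite_pow]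

lemma sum_sq_conj_diagonal_sub {Q : Matrix n n ℝ} (hQ : Qᵀ * Q = 1) (μ ν : n → ℝ) :
    ∑ i, ∑ j, ((Q * diagonal μ * Qᵀ) i j - (Q * diagonal ν * Qᵀ) i j) ^ 2 =
      ∑ k, (μ k - ν k) ^ 2 := by
  simp only [← Matrix.sub_apply, ← Matrix.sub_mul, ← Matrix.mul_sub, diagonal_sub,
    sum_sq_conj_diagonal hQ]

lemma sum_mul_conj_diagonal (Q U : Matrix n n ℝ) (μ g : n → ℝ) :
    ∑ i, ∑ j, (Q * diagonal μ * Qᵀ) i j * (U * diagonal g * Uᵀ) i j =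
      μ ⬝ᵥ (of (fun k l => (Qᵀ * U) k l ^ 2) *ᵥ g) := by
  have : trace (Q * diagonal μ * Qᵀ * (U * diagonal g * Uᵀ)ᵀ) =
      trace (diagonal μ * (Qᵀ * U * diagonal g * (Qᵀ * U)ᵀ)) := by
    simp only [transpose_mul, transpose_transpose, diagonal_transpose, Matrix.mul_assoc]
    rw [trace_mul_comm Q]
    simp only [Matrix.mul_assoc]
  rw [sum_mul_eq_trace_mul_transpose, this]
  simp only [trace, Matrix.diag, diagonal_mul, mul_diagonal_mul_transpose_apply, dotProduct,
    mulVec, of_apply, Finset.mul_sum]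
  exact sum_congr rfl fun k _ => sum_congr rfl fun l _ => by ring

end Frobenius

section HoffmanWielandt

variable {n : Type*} [Fintype n] [DecidableEq n]

theorem Monovary.dotProduct_mulVec_le {f g : n → ℝ} (hfg : Monovary f g) {S : Matrix n n ℝ}
    (hS : S ∈ doublyStochastic ℝ n) : f ⬝ᵥ (S *ᵥ g) ≤ f ⬝ᵥ g := by
  rw [← SetLike.mem_coe, doublyStochastic_eq_convexHull_permMatrix] at hS
  refine convexHull_min ?_
    (convex_halfSpace_le (f := fun M : Matrix n n ℝ => f ⬝ᵥ (M *ᵥ g)) ?_ _) hS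
  · rintro _ ⟨σ, rfl⟩
    simpa [permMatrix_mulVec, dotProduct] using hfg.sum_mul_comp_perm_le_sum_mul (σ := σ)
  · exact ⟨fun _ _ => by simp [add_mulVec], fun _ _ => by simp [smul_mulVec]⟩

lemma orthogonal_sq_mem_doublyStochastic {W : Matrix n n ℝ} (hW : Wᵀ * W = 1) :
    of (fun k l => W k l ^ 2) ∈ doublyStochastic ℝ n := by
  have hW' : W * Wᵀ = 1 := mul_eq_one_comm.mp hW
  refine mem_doublyStochastic_iff_sum.mpr ⟨fun _ _ => sq_nonneg _, fun i => ?_, fun j => ?_⟩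
  · simpa [mul_apply, sq] using congrFun (congrFun hW' i) i
  · simpa [mul_apply, sq] using congrFun (congrFun hW j) j

theorem sum_sq_sub_le_of_monovary {Q U : Matrix n n ℝ} (hQ : Qᵀ * Q = 1) (hU : Uᵀ * U = 1)
    {μ g : n → ℝ} (hμg : Monovary μ g) :
    ∑ k, (μ k - g k) ^ 2 ≤
      ∑ i, ∑ j, ((Q * diagonal μ * Qᵀ) i j - (U * diagonal g * Uᵀ) i j) ^ 2 := by
  have hW : (Qᵀ * U)ᵀ * (Qᵀ * U) = 1 := by
    rw [transpose_mul, transpose_transpose, Matrix.mul_assoc, ← Matrix.mul_assoc Q,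
      mul_eq_one_comm.mp hQ, Matrix.one_mul, hU]
  have hcross := hμg.dotProduct_mulVec_le (orthogonal_sq_mem_doublyStochastic hW)
  rw [← sum_mul_conj_diagonal, dotProduct] at hcross
  have hsq (a b : ℝ) : (a - b) ^ 2 = a ^ 2 - 2 * (a * b) + b ^ 2 := by ring
  simp only [hsq, sum_add_distrib, sum_sub_distrib, ← mul_sum]
  rw [sum_sq_conj_diagonal hQ, sum_sq_conj_diagonal hU]
  linarith

end HoffmanWielandt

section Inertia

variable {ι κ : Type*} [Fintype ι] [DecidableEq ι] [Fintype κ] [DecidableEq κ]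
  {P : Matrix ι κ ℝ} {s : κ → ℝ} {β : ι → ℝ}

/-- If there were more positive `β i` than positive `s j`, some nonzero combination `w` of the
rows `P i` with `β i > 0` would vanish on the coordinates where `s > 0`; then `∑ s j * w j ^ 2`
would be both positive and nonpositive. -/
theorem card_pos_le_of_mul_diagonal_mul_transpose (h : P * diagonal s * Pᵀ = diagonal β) :
    #{i | 0 < β i} ≤ #{j | 0 < s j} := by
  by_contra! hlt
  let R : Matrix {i // 0 < β i} κ ℝ := P.submatrix Subtype.val id
  have hker :
      LinearMap.ker (R.submatrix id (Subtype.val : {j // 0 < s j} → κ)).vecMulLinear ≠ ⊥ :=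
    LinearMap.ker_ne_bot_of_finrank_lt (by simpa [Fintype.card_subtype] using hlt)
  obtain ⟨c, hc, hc0⟩ := (Submodule.ne_bot_iff _).mp hker
  set w := c ᵥ* R
  have hw : ∀ j, 0 < s j → w j = 0 := fun j hj => congrFun hc ⟨j, hj⟩
  have hRR : R * diagonal s * Rᵀ = diagonal (fun t : {i // 0 < β i} => β t) := by
    ext t t'
    rw [mul_diagonal_mul_transpose_apply]
    simpa [R, mul_diagonal_mul_transpose_apply, diagonal_apply, Subtype.ext_iff] using
      congrFun (congrFun h t) t'
  have hform :
      w ⬝ᵥ (diagonal s *ᵥ w) = c ⬝ᵥ (diagonal (fun t : {i // 0 < β i} => β t) *ᵥ c) := by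
    rw [← hRR, ← mulVec_mulVec, ← mulVec_mulVec, dotProduct_mulVec c R, mulVec_transpose]
  have hpos : 0 < c ⬝ᵥ (diagonal (fun t : {i // 0 < β i} => β t) *ᵥ c) := by
    obtain ⟨t₀, ht₀⟩ := Function.ne_iff.mp hc0
    simp only [dotProduct, mulVec_diagonal]
    refine sum_pos' (fun t _ => ?_) ⟨t₀, mem_univ _, ?_⟩
    · nlinarith [t.2, mul_self_nonneg (c t)]
    · nlinarith [t₀.2, mul_self_pos.mpr ht₀]
  have hnonpos : w ⬝ᵥ (diagonal s *ᵥ w) ≤ 0 := by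
    simp only [dotProduct, mulVec_diagonal]
    refine sum_nonpos fun j _ => ?_
    by_cases hj : 0 < s j
    · simp [hw j hj]
    · nlinarith [mul_self_nonneg (w j)]
  linarith

theorem card_neg_le_of_mul_diagonal_mul_transpose (h : P * diagonal s * Pᵀ = diagonal β) :
    #{i | β i < 0} ≤ #{j | s j < 0} := by
  have h' : P * diagonal (fun j => -s j) * Pᵀ = diagonal (fun i => -β i) := by
    rw [← diagonal_neg, ← diagonal_neg, Matrix.mul_neg, Matrix.neg_mul, h]
  simpa using card_pos_le_of_mul_diagonal_mul_transpose h'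

end Inertia

theorem Antitone.nonpos_of_card_pos_le {α : Type*} [LinearOrder α] [Zero α] {n p : ℕ}
    {g : Fin n → α} (hg : Antitone g) (h : #{k | 0 < g k} ≤ p) {k : Fin n} (hk : p ≤ k) :
    g k ≤ 0 := by
  by_contra! hpos
  have := card_le_card fun i (hi : i ∈ Iic k) =>
    mem_filter.mpr ⟨mem_univ i, hpos.trans_le (hg (mem_Iic.mp hi))⟩
  rw [Fin.card_Iic] at this
  omega

theorem Antitone.nonneg_of_card_neg_le {α : Type*} [LinearOrder α] [Zero α] {n q : ℕ}
    {g : Fin n → α} (hg : Antitone g) (h : #{k | g k < 0} ≤ q) {k : Fin n} (hk : k + q < n) :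
    0 ≤ g k := by
  by_contra! hneg
  have := card_le_card fun i (hi : i ∈ Ici k) =>
    mem_filter.mpr ⟨mem_univ i, (hg (mem_Ici.mp hi)).trans_lt hneg⟩
  rw [Fin.card_Ici] at this
  omega

theorem Antitone.apply_zero_pos_of_sum_pos {n : ℕ} (hn : 0 < n) {f : Fin n → ℝ}
    (hf : Antitone f) (h : 0 < ∑ k, f k) : 0 < f ⟨0, hn⟩ := by
  by_contra! h0
  exact h.not_ge (sum_nonpos fun k _ => (hf (Fin.le_iff_val_le_val.mpr (Nat.zero_le _))).trans h0)

theorem sign_pattern_of_mul_lorentzJ_mul_transpose {n d : ℕ}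
    {P : Matrix (Fin n) (Fin (d + 1)) ℝ} {g : Fin n → ℝ} (hg : Antitone g)
    (h : P * lorentzJ d * Pᵀ = diagonal g) :
    (∀ k : Fin n, 1 ≤ (k : ℕ) → g k ≤ 0) ∧ (∀ k : Fin n, (k : ℕ) + d < n → 0 ≤ g k) := by
  refine ⟨fun k hk => hg.nonpos_of_card_pos_le ?_ hk,
    fun k hk => hg.nonneg_of_card_neg_le ?_ hk⟩
  · refine (card_pos_le_of_mul_diagonal_mul_transpose h).trans ?_
    refine (card_le_card fun j hj => ?_).trans (card_singleton (0 : Fin (d + 1))).le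
    by_contra hj0
    simp only [mem_filter, mem_univ, true_and, mem_singleton.not.mp hj0, if_false] at hj
    norm_num at hj
  · refine (card_neg_le_of_mul_diagonal_mul_transpose h).trans ?_
    refine (card_le_card (t := univ.erase 0) fun j hj => ?_).trans (by simp)
    simp only [mem_filter, mem_univ, true_and] at hj
    refine mem_erase.mpr ⟨fun hj0 => ?_, mem_univ j⟩
    simp only [hj0, if_true] at hj
    norm_num at hj

lemma Function.Injective.sum_mul_extend_zero {κ m α : Type*} [Fintype κ] [Fintype m]
    [NonUnitalNonAssocSemiring α] {ι : κ → m} (hι : Function.Injective ι) (F : m → α)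
    (w : κ → α) :
    ∑ l, F l * Function.extend ι w 0 l = ∑ j, F (ι j) * w j := by
  classical
  rw [← sum_subset (subset_univ (univ.map ⟨ι, hι⟩)), sum_map]
  · simp [hι.extend_apply]
  · intro l _ hl
    rw [Function.extend_apply' _ _ _ (by simpa using hl), Pi.zero_apply, mul_zero]

theorem Matrix.mul_diagonal_mul_transpose_of_cols {m κ : Type*} [Fintype m] [DecidableEq m]
    [Fintype κ] [DecidableEq κ] {Q : Matrix m m ℝ} {ι : κ → m} (hι : Function.Injective ι)
    {c : κ → ℝ} {X : Matrix m κ ℝ} (hX : ∀ i j, X i j = c j * Q i (ι j)) (s : κ → ℝ) :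
    X * diagonal s * Xᵀ =
      Q * diagonal (Function.extend ι (fun j => s j * c j ^ 2) 0) * Qᵀ := by
  ext i k
  simp only [mul_diagonal_mul_transpose_apply, mul_right_comm _ _ (Q k _),
    hι.sum_mul_extend_zero, hX]
  exact sum_congr rfl fun j _ => by ring

lemma Nat.sub_sub_one_add_lt {n d j : ℕ} (hn : 0 < n) (hd : d ≤ n - 1) (hj : j < d + 1) :
    n - d - 1 + j < n := by
  omega

/-- Column `j` of the minimiser uses the eigenvector with this index: the top one for `j = 0`, the
last `d` ones otherwise. -/
def hydraIndex {n d : ℕ} (hn : 0 < n) (hd : d ≤ n - 1) (j : Fin (d + 1)) : Fin n :=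
  if j = 0 then ⟨0, hn⟩ else ⟨n - d - 1 + j, Nat.sub_sub_one_add_lt hn hd j.isLt⟩

section hydraIndex

variable {n d : ℕ} (hn : 0 < n) (hd : d ≤ n - 1)

lemma hydraIndex_injective : Function.Injective (hydraIndex hn hd) := by
  intro i j h
  simp only [hydraIndex] at h
  split_ifs at h with hi hj hj <;> simp only [Fin.ext_iff, Fin.val_zero] at * <;> omega

@[simp]
lemma hydraIndex_zero : hydraIndex hn hd 0 = ⟨0, hn⟩ := if_pos rfl

lemma one_le_hydraIndex {j : Fin (d + 1)} (hj : j ≠ 0) : 1 ≤ (hydraIndex hn hd j : ℕ) := by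
  have : (j : ℕ) ≠ 0 := fun h => hj (Fin.ext h)
  simp only [hydraIndex, if_neg hj]
  omega

lemma exists_hydraIndex_eq {l : Fin n} (hl : (l : ℕ) = 0 ∨ n ≤ l + d) :
    ∃ j, hydraIndex hn hd j = l := by
  rcases hl with hl | hl
  · exact ⟨0, Fin.ext (by simp [hydraIndex, hl])⟩
  · have hj : (⟨l - (n - d - 1), by omega⟩ : Fin (d + 1)) ≠ 0 := by
      simp only [ne_eq, Fin.ext_iff, Fin.val_zero]
      omega
    refine ⟨⟨l - (n - d - 1), by omega⟩, ?_⟩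
    rw [hydraIndex, if_neg hj, Fin.ext_iff]
    dsimp only
    omega

end hydraIndex

lemma sq_add_max_neg_le {a b : ℝ} (hb : b ≤ 0) : (a + max (-a) 0) ^ 2 ≤ (a - b) ^ 2 := by
  rcases le_total a 0 with ha | ha
  · rw [max_eq_left (neg_nonneg.mpr ha)]
    nlinarith
  · rw [max_eq_right (neg_nonpos.mpr ha)]
    nlinarith

theorem sum_sq_sub_hydra_le {n d : ℕ} (hn : 0 < n) (hd : d ≤ n - 1)
    {Q : Matrix (Fin n) (Fin n) ℝ} (hQ : Qᵀ * Q = 1) {μ : Fin n → ℝ} (hμ₀ : 0 ≤ μ ⟨0, hn⟩)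
    {X : Matrix (Fin n) (Fin (d + 1)) ℝ}
    (hX : ∀ i j, X i j =
      (if j = 0 then √(μ (hydraIndex hn hd j)) else √(max (-μ (hydraIndex hn hd j)) 0)) *
        Q i (hydraIndex hn hd j))
    {g : Fin n → ℝ} (hg_pos : ∀ k : Fin n, 1 ≤ (k : ℕ) → g k ≤ 0)
    (hg_neg : ∀ k : Fin n, (k : ℕ) + d < n → 0 ≤ g k) :
    ∑ i, ∑ j, ((Q * diagonal μ * Qᵀ) i j - (X * lorentzJ d * Xᵀ) i j) ^ 2 ≤
      ∑ k, (μ k - g k) ^ 2 := by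
  set ι := hydraIndex hn hd
  have hι := hydraIndex_injective hn hd
  set c : Fin (d + 1) → ℝ := fun j => if j = 0 then √(μ (ι j)) else √(max (-μ (ι j)) 0)
  rw [lorentzJ, mul_diagonal_mul_transpose_of_cols hι (c := c) hX, sum_sq_conj_diagonal_sub hQ]
  refine sum_le_sum fun l _ => ?_
  by_cases hl : ∃ j, ι j = l
  · obtain ⟨j, rfl⟩ := hl
    rw [hι.extend_apply]
    by_cases hj : j = 0
    · simpa [c, hj, ι, Real.sq_sqrt hμ₀] using sq_nonneg (μ ⟨0, hn⟩ - g ⟨0, hn⟩)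
    · simp only [c, hj, if_false, Real.sq_sqrt (le_max_right _ _), neg_one_mul, sub_neg_eq_add]
      exact sq_add_max_neg_le (hg_pos _ (one_le_hydraIndex hn hd hj))
  · have hl' : 1 ≤ (l : ℕ) ∧ (l : ℕ) + d < n := by
      by_contra! h
      exact hl (exists_hydraIndex_eq hn hd (by omega))
    rw [Function.extend_apply' _ _ _ hl, Pi.zero_apply,
      le_antisymm (hg_pos l hl'.1) (hg_neg l hl'.2)]

theorem hydra_minimizes_strain {n d : ℕ} (hn : 0 < n) (hd : d ≤ n - 1)
    (A : Matrix (Fin n) (Fin n) ℝ) (hApos : ∀ i j, 0 < A i j)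
    (Q : Matrix (Fin n) (Fin n) ℝ) (hQ : Qᵀ * Q = 1)
    (μ : Fin n → ℝ) (hμ : Antitone μ)
    (hA : A = Q * Matrix.diagonal μ * Qᵀ)
    (X : Matrix (Fin n) (Fin (d + 1)) ℝ)
    (hX : ∀ (i : Fin n) (j : Fin (d + 1)),
      X i j =
        if j = 0 then
          Real.sqrt (μ ⟨0, hn⟩) * Q i ⟨0, hn⟩
        else
          Real.sqrt (max (-(μ ⟨n - d - 1 + j.val, by omega⟩)) 0) *
            Q i ⟨n - d - 1 + j.val, by omega⟩) :
    ∀ Y : Matrix (Fin n) (Fin (d + 1)) ℝ,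
      ∑ i, ∑ j, (A i j - (X * lorentzJ d * Xᵀ) i j) ^ 2 ≤
        ∑ i, ∑ j, (A i j - (Y * lorentzJ d * Yᵀ) i j) ^ 2 := by
  intro Y
  have htrace : trace A = ∑ k, μ k := by
    rw [hA, trace_mul_cycle, hQ, Matrix.one_mul, trace_diagonal]
  have hμ₀ : 0 < μ ⟨0, hn⟩ := by
    refine hμ.apply_zero_pos_of_sum_pos hn (htrace ▸ ?_)
    exact sum_pos (fun i _ => hApos i i) ⟨⟨0, hn⟩, mem_univ _⟩
  have hB_symm : (Y * lorentzJ d * Yᵀ).IsSymm := isSymm_mul_diagonal_mul_transpose Y _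
  obtain ⟨U, g, hU, hg, hB⟩ := hB_symm.exists_orthogonal_antitone_diagonalization
  have hUY : Uᵀ * Y * lorentzJ d * (Uᵀ * Y)ᵀ = diagonal g := by
    calc Uᵀ * Y * lorentzJ d * (Uᵀ * Y)ᵀ = Uᵀ * (Y * lorentzJ d * Yᵀ) * U := by
          simp only [transpose_mul, transpose_transpose, Matrix.mul_assoc]
      _ = diagonal g := by
          simp only [hB, Matrix.mul_assoc, hU, Matrix.mul_one]
          rw [← Matrix.mul_assoc, hU, Matrix.one_mul]
  obtain ⟨hg_pos, hg_neg⟩ := sign_pattern_of_mul_lorentzJ_mul_transpose hg hUY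
  calc _ ≤ ∑ k, (μ k - g k) ^ 2 := by
        rw [hA]
        refine sum_sq_sub_hydra_le hn hd hQ hμ₀.le (fun i j => ?_) hg_pos hg_neg
        by_cases hj : j = 0 <;> simp [hX, hydraIndex, hj]
    _ ≤ _ := by
        rw [hA, hB]
        exact sum_sq_sub_le_of_monovary hQ hU (hμ.monovary hg)
end

section
/- Let A be a symmetric real n×n matrix with eigenvalues λ₁ ≥ ⋯ ≥ λₙ and let B be symmetric with eigenvalues μ₁ ≥ ⋯ ≥ μₙ. Then ‖A − B‖_F² ≥ Σ_{i=1}^n (λ_i − μ_i)². -/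
open Matrix

theorem wielandt_hoffman {n : ℕ}
    (A B : Matrix (Fin n) (Fin n) ℝ)
    (Q : Matrix (Fin n) (Fin n) ℝ) (hQ : Qᵀ * Q = 1)
    (μ : Fin n → ℝ) (hμ : Antitone μ)
    (hA : A = Q * Matrix.diagonal μ * Qᵀ)
    (P : Matrix (Fin n) (Fin n) ℝ) (hP : Pᵀ * P = 1)
    (ν : Fin n → ℝ) (hν : Antitone ν)
    (hB : B = P * Matrix.diagonal ν * Pᵀ) :
    ∑ i, (μ i - ν i) ^ 2 ≤ ∑ i, ∑ j, (A i j - B i j) ^ 2 := by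
  have hQ' : Q * Qᵀ = 1 := mul_eq_one_comm.mp hQ
  have hP' : P * Pᵀ = 1 := mul_eq_one_comm.mp hP
  set U : Matrix (Fin n) (Fin n) ℝ := Qᵀ * P with hU
  have hUU : Uᵀ * U = 1 := by
    simp only [hU, transpose_mul, transpose_transpose, Matrix.mul_assoc]
    rw [← Matrix.mul_assoc Q Qᵀ P, hQ', Matrix.one_mul, hP]
  have hUU' : U * Uᵀ = 1 := mul_eq_one_comm.mp hUU
  -- row and column sums of squares of U
  have hrow : ∀ i, ∑ j, (U i j) ^ 2 = 1 := by
    intro i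
    have := congrFun (congrFun hUU' i) i
    simpa [Matrix.mul_apply, sq] using this
  have hcol : ∀ j, ∑ i, (U i j) ^ 2 = 1 := by
    intro j
    have := congrFun (congrFun hUU j) j
    simpa [Matrix.mul_apply, sq] using this
  -- the doubly stochastic matrix S
  set S : Matrix (Fin n) (Fin n) ℝ := fun i j => (U i j) ^ 2 with hS
  have hSmem : S ∈ doublyStochastic ℝ (Fin n) := by
    rw [mem_doublyStochastic]
    refine ⟨fun i j => sq_nonneg _, ?_, ?_⟩
    · funext i
      simpa [Matrix.mulVec, dotProduct] using hrow i
    · funext j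
      simpa [Matrix.vecMul, dotProduct] using hcol j
  -- key inequality: ∑ i j, μ i * ν j * S i j ≤ ∑ i, μ i * ν i
  have hmono : Monovary μ ν := hμ.monovary hν
  have hkey : ∑ i, ∑ j, μ i * ν j * S i j ≤ ∑ i, μ i * ν i := by
    obtain ⟨w, hw0, hw1, hwS⟩ := exists_eq_sum_perm_of_mem_doublyStochastic hSmem
    have hSij : ∀ i j, S i j = ∑ σ : Equiv.Perm (Fin n), w σ * (σ.permMatrix ℝ) i j := by
      intro i j
      rw [← hwS]
      simp [Matrix.sum_apply, Matrix.smul_apply, smul_eq_mul, Equiv.Perm.permMatrix,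
        PEquiv.toMatrix_apply, Equiv.toPEquiv_apply, mul_ite, mul_one, mul_zero]
    have hstep : ∀ (σ : Equiv.Perm (Fin n)) (i : Fin n),
        ∑ j, μ i * ν j * (w σ * (σ.permMatrix ℝ) i j) = w σ * (μ i * ν (σ i)) := by
      intro σ i
      rw [Finset.sum_eq_single (σ i)]
      · simp [Equiv.Perm.permMatrix, PEquiv.toMatrix_apply, Equiv.toPEquiv_apply]
        ring
      · intro j _ hj
        simp [Equiv.Perm.permMatrix, PEquiv.toMatrix_apply, Equiv.toPEquiv_apply, hj.symm]
      · intro h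
        exact absurd (Finset.mem_univ _) h
    calc ∑ i, ∑ j, μ i * ν j * S i j
        = ∑ σ : Equiv.Perm (Fin n), w σ * ∑ i, μ i * ν (σ i) := by
          simp only [hSij, Finset.mul_sum]
          have h1 : ∀ i, ∑ j, ∑ σ : Equiv.Perm (Fin n),
              μ i * ν j * (w σ * (σ.permMatrix ℝ) i j) = ∑ σ : Equiv.Perm (Fin n), w σ * (μ i * ν (σ i)) := by
            intro i
            rw [Finset.sum_comm]
            exact Finset.sum_congr rfl fun σ _ => hstep σ i
          rw [Finset.sum_congr rfl fun i _ => h1 i, Finset.sum_comm]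
      _ ≤ ∑ σ : Equiv.Perm (Fin n), w σ * ∑ i, μ i * ν i := by
          refine Finset.sum_le_sum fun σ _ => mul_le_mul_of_nonneg_left ?_ (hw0 σ)
          simpa [smul_eq_mul] using hmono.sum_smul_comp_perm_le_sum_smul (σ := σ)
      _ = ∑ i, μ i * ν i := by rw [← Finset.sum_mul, hw1, one_mul]
  -- symmetry of A and B
  have hAsymm : Aᵀ = A := by
    rw [hA]; simp [Matrix.transpose_mul, Matrix.diagonal_transpose, Matrix.mul_assoc]
  have hBsymm : Bᵀ = B := by
    rw [hB]; simp [Matrix.transpose_mul, Matrix.diagonal_transpose, Matrix.mul_assoc]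
  -- trace identities
  have trA : trace (A * A) = ∑ i, μ i ^ 2 := by
    have e1 : A * A = Q * (Matrix.diagonal μ * (Matrix.diagonal μ * Qᵀ)) := by
      rw [hA]; simp only [Matrix.mul_assoc]
      rw [← Matrix.mul_assoc Qᵀ Q, hQ, Matrix.one_mul]
    rw [e1, Matrix.trace_mul_comm]
    simp only [Matrix.mul_assoc]
    rw [hQ, Matrix.mul_one, Matrix.diagonal_mul_diagonal, Matrix.trace_diagonal]
    simp [sq]
  have trB : trace (B * B) = ∑ i, ν i ^ 2 := by
    have e1 : B * B = P * (Matrix.diagonal ν * (Matrix.diagonal ν * Pᵀ)) := by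
      rw [hB]; simp only [Matrix.mul_assoc]
      rw [← Matrix.mul_assoc Pᵀ P, hP, Matrix.one_mul]
    rw [e1, Matrix.trace_mul_comm]
    simp only [Matrix.mul_assoc]
    rw [hP, Matrix.mul_one, Matrix.diagonal_mul_diagonal, Matrix.trace_diagonal]
    simp [sq]
  have hUt : Pᵀ * Q = Uᵀ := by rw [hU]; simp [Matrix.transpose_mul]
  have trAB : trace (A * B) = ∑ i, ∑ j, μ i * ν j * S i j := by
    have e1 : A * B = Q * (Matrix.diagonal μ * (U * (Matrix.diagonal ν * Pᵀ))) := by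
      rw [hA, hB]; simp only [Matrix.mul_assoc]
      rw [← Matrix.mul_assoc Qᵀ P, ← hU]
    rw [e1, Matrix.trace_mul_comm]
    simp only [Matrix.mul_assoc]
    rw [hUt]
    have e2 : ∀ i, (Matrix.diagonal μ * (U * (Matrix.diagonal ν * Uᵀ))) i i
        = ∑ j, μ i * ν j * S i j := by
      intro i
      rw [Matrix.diagonal_mul, Matrix.mul_apply, Finset.mul_sum]
      refine Finset.sum_congr rfl fun j _ => ?_
      rw [Matrix.diagonal_mul, Matrix.transpose_apply, hS]
      ring
    simp only [Matrix.trace, Matrix.diag]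
    exact Finset.sum_congr rfl fun i _ => e2 i
  -- entrywise sums as traces
  have hApt : ∀ i j, A i j = A j i := fun i j => by
    simpa using (congrFun (congrFun hAsymm j) i)
  have hBpt : ∀ i j, B i j = B j i := fun i j => by
    simpa using (congrFun (congrFun hBsymm j) i)
  have sA : ∑ i, ∑ j, A i j ^ 2 = trace (A * A) := by
    simp only [Matrix.trace, Matrix.diag, Matrix.mul_apply, sq]
    exact Finset.sum_congr rfl fun i _ => Finset.sum_congr rfl fun j _ => by rw [← hApt j i]
  have sB : ∑ i, ∑ j, B i j ^ 2 = trace (B * B) := by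
    simp only [Matrix.trace, Matrix.diag, Matrix.mul_apply, sq]
    exact Finset.sum_congr rfl fun i _ => Finset.sum_congr rfl fun j _ => by rw [← hBpt j i]
  have sAB : ∑ i, ∑ j, A i j * B i j = trace (A * B) := by
    simp only [Matrix.trace, Matrix.diag, Matrix.mul_apply]
    exact Finset.sum_congr rfl fun i _ => Finset.sum_congr rfl fun j _ => by rw [← hBpt j i]
  -- expansions
  have expandR : ∑ i, ∑ j, (A i j - B i j) ^ 2
      = (∑ i, ∑ j, A i j ^ 2) + (∑ i, ∑ j, B i j ^ 2) - 2 * ∑ i, ∑ j, A i j * B i j := by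
    have h : ∀ i j : Fin n, (A i j - B i j) ^ 2
        = A i j ^ 2 + B i j ^ 2 - 2 * (A i j * B i j) := fun i j => by ring
    simp_rw [h, Finset.sum_sub_distrib, Finset.sum_add_distrib, Finset.mul_sum]
  have expandL : ∑ i, (μ i - ν i) ^ 2
      = (∑ i, μ i ^ 2) + (∑ i, ν i ^ 2) - 2 * ∑ i, μ i * ν i := by
    have h : ∀ i : Fin n, (μ i - ν i) ^ 2 = μ i ^ 2 + ν i ^ 2 - 2 * (μ i * ν i) :=
      fun i => by ring
    simp_rw [h, Finset.sum_sub_distrib, Finset.sum_add_distrib, Finset.mul_sum]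
  rw [expandL, expandR, sA, sB, sAB, trA, trB, trAB]
  linarith [hkey]
end

section
/- Let D ∈ ℝ^{n×n} be a symmetric matrix with zero diagonal, C = I − (1/n)𝟙 the centering matrix (𝟙 the all-ones matrix), and A = −(1/2) Cᵀ D C. If D is the matrix of squared Euclidean distances of points x₁,…,xₙ ∈ ℝ^d, i.e. D_{ij} = |x_i − x_j|², then A = Y Yᵀ where Y is the matrix whose rows are the centered points x_i − x̄, with x̄ the mean of the x_i. In particular A is positive semidefinite of rank at most d. -/
open Matrix

theorem mds_double_centering {n d : ℕ} (hn : 0 < n)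
    (x : Fin n → (Fin d → ℝ))
    (D : Matrix (Fin n) (Fin n) ℝ)
    (hD : ∀ i j, D i j = ∑ k, (x i k - x j k) ^ 2)
    (C : Matrix (Fin n) (Fin n) ℝ)
    (hC : C = 1 - (1 / (n : ℝ)) • (Matrix.of fun _ _ => (1 : ℝ)))
    (A : Matrix (Fin n) (Fin n) ℝ)
    (hA : A = (-(1 / 2 : ℝ)) • (Cᵀ * D * C))
    (Y : Matrix (Fin n) (Fin d) ℝ)
    (hY : ∀ i k, Y i k = x i k - (1 / (n : ℝ)) * ∑ j, x j k) :
    A = Y * Yᵀ ∧ A.PosSemidef ∧ A.rank ≤ d := by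
  have hn' : (n : ℝ) ≠ 0 := Nat.cast_ne_zero.mpr hn.ne'
  -- column/row sums of C vanish
  have hcol : ∀ j, ∑ b, C b j = 0 := by
    intro j
    simp [hC, Matrix.one_apply, Finset.sum_sub_distrib, Finset.sum_ite_eq,
      mul_comm, hn']
  have hrow : ∀ i, ∑ b, C i b = 0 := by
    intro i
    simp [hC, Matrix.one_apply, Finset.sum_sub_distrib, Finset.sum_ite_eq',
      mul_comm, hn']
  -- C is symmetric
  have hCsym : Cᵀ = C := by
    rw [hC]; ext i j; simp [Matrix.one_apply, eq_comm]
  set X : Matrix (Fin n) (Fin d) ℝ := Matrix.of x with hX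
  have hYX : Y = C * X := by
    ext i k
    have : ∑ b, C i b * x b k
        = ∑ b, ((if i = b then (1:ℝ) else 0) - (1/(n:ℝ))) * x b k := by
      apply Finset.sum_congr rfl
      intro b _
      simp [hC, Matrix.one_apply]
    simp only [hY, Matrix.mul_apply, hX, Matrix.of_apply, this, sub_mul,
      Finset.sum_sub_distrib, ite_mul, zero_mul, Finset.sum_ite_eq,
      Finset.mem_univ, if_true, Finset.mul_sum, one_mul]
  -- decompose D
  set F : Matrix (Fin n) (Fin n) ℝ := Matrix.of (fun i _ => ∑ k, x i k ^ 2) with hF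
  have hDdec : D = F + Fᵀ - (2:ℝ) • (X * Xᵀ) := by
    ext i j
    simp only [hD i j, Matrix.sub_apply, Matrix.add_apply, hF, Matrix.of_apply,
      Matrix.transpose_apply, Matrix.smul_apply, Matrix.mul_apply, hX,
      smul_eq_mul, Finset.mul_sum]
    rw [← Finset.sum_add_distrib, ← Finset.sum_sub_distrib]
    apply Finset.sum_congr rfl
    intro k _
    ring
  have hFC : F * C = 0 := by
    ext i j
    simp only [Matrix.mul_apply, hF, Matrix.of_apply, Matrix.zero_apply,
      ← Finset.sum_mul]
    rw [← Finset.mul_sum, hcol, mul_zero]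
  have hCFt : Cᵀ * Fᵀ = 0 := by
    rw [← Matrix.transpose_mul, hFC, Matrix.transpose_zero]
  have hAeq : A = Y * Yᵀ := by
    rw [hA, hDdec]
    rw [Matrix.mul_sub, Matrix.mul_add, Matrix.sub_mul, Matrix.add_mul]
    rw [Matrix.mul_assoc Cᵀ F C, hFC, Matrix.mul_zero, hCFt, Matrix.zero_mul,
      add_zero]
    rw [Matrix.mul_smul, Matrix.smul_mul, zero_sub, smul_neg, neg_smul, neg_neg,
      smul_smul]
    norm_num
    rw [hYX, Matrix.transpose_mul, hCsym]
    rw [Matrix.mul_assoc, Matrix.mul_assoc, Matrix.mul_assoc]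
  refine ⟨hAeq, ?_, ?_⟩
  · rw [hAeq]
    have : Yᵀ = Yᴴ := by ext i j; simp [Matrix.conjTranspose_apply]
    rw [this]
    exact Matrix.posSemidef_self_mul_conjTranspose Y
  · rw [hAeq]
    calc (Y * Yᵀ).rank ≤ Y.rank := Matrix.rank_mul_le_left Y Yᵀ
    _ ≤ d := by simpa using Y.rank_le_width
end
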